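/- Let a_{11}, a_{22}, a_{33} be positive reals and a_{12} = a_{21}, a_{13} = a_{31}, a_{23} = a_{32} ∈ ℝ. Let C be the 3×3 real symmetric matrix with diagonal entries C_{ii} = a_{ii} and off-diagonal entries C_{ij} = −a_{ij}. Then for all r_1, r_2 ∈ ℕ and all x ∈ ℝ³: (A_2*)^{r_2} (A_1*)^{r_1} exp(−xᵀCx) = (1+a_{11})^{r_1/2} (1+a_{22})^{r_2/2} · Σ_{k=0}^{min(r_1, r_2)} C(r_1, k) C(r_2, k) · (2 a_{12})^k k! / ((1+a_{11})(1+a_{22}))^{k/2} · H_{r_2−k}(S_2(x)) · H_{r_1−k}(S_1(x)) · exp(−xᵀCx), where C(n,k) denotes the binomial coefficient. -/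

import Mathlib

/-- The physicists' Hermite polynomial `H_n(x) = (-1)^n e^{x^2} (d^n/dx^n) e^{-x^2}`. -/
noncomputable def Hpoly (n : ℕ) (x : ℝ) : ℝ :=
  (-1 : ℝ) ^ n * Real.exp (x ^ 2) * iteratedDeriv n (fun y => Real.exp (-(y ^ 2))) x

/-- Partial derivative in the `j`-th coordinate of a function on `ℝ³`. -/
noncomputable def pd (j : Fin 3) (f : (Fin 3 → ℝ) → ℝ) : (Fin 3 → ℝ) → ℝ :=
  fun x => deriv (fun t => f (Function.update x j t)) (x j)

/-- The creation operator `A_j* f = -∂f/∂x_j + 2 x_j f` on functions on `ℝ³`. -/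
noncomputable def creation (j : Fin 3) (f : (Fin 3 → ℝ) → ℝ) : (Fin 3 → ℝ) → ℝ :=
  fun x => -(pd j f x) + 2 * x j * f x

/-- `S_i(x) = ((1+a_{ii}) x_i - ∑_{j ≠ i} a_{ij} x_j) / √(1+a_{ii})`. -/
noncomputable def Sfun (a : Fin 3 → Fin 3 → ℝ) (i : Fin 3) (x : Fin 3 → ℝ) : ℝ :=
  ((1 + a i i) * x i - ∑ j ∈ Finset.univ.filter (fun j => j ≠ i), a i j * x j) /
    Real.sqrt (1 + a i i)

/-!
Write `s_i = √(1 + a_ii)` and, for `i ≠ j`, `G_{m,n} = H_m(S_i) H_n(S_j) e^{-xᵀCx}`. Since `C` is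
symmetric, `2 x_i + ∂_i (xᵀCx) = 2 s_i S_i`; moreover `∂_i S_i = s_i`, `∂_i S_j = -a_ij / s_j` and
`H_n' = 2n H_{n-1}`. With `H_{m+1}(y) = 2y H_m(y) - H_m'(y)` this gives
`A_i* G_{m,n} = s_i (G_{m+1,n} + t n G_{m,n-1})`, `t = 2 a_ij / (s_i s_j)`: on smooth functions
`A_i*` is `s_i` times a raising operator in `m` plus `t` times a lowering operator in `n`, so
Pascal's rule gives `(A_i*)^r G_{0,N} = s_i^r ∑_k C(r,k) N!/(N-k)! t^k G_{r-k,N-k}`.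
Apply this first with `(i, j) = (1, 2)`, `N = 0` to `e^{-xᵀCx} = G_{0,0}`, which yields
`s_1^{r₁} H_{r₁}(S_1) e^{-xᵀCx}`, and then with `(i, j) = (2, 1)`, `N = r₁`.
-/

open Finset
open scoped ContDiff

theorem ladder_pow_apply_range {R V : Type*} [CommRing R] [AddCommGroup V] [Module R V]
    (T : Module.End R V) (g : ℕ → ℕ → V) (s t : R)
    (hT : ∀ m n, T (g m n) = s • (g (m + 1) n + (t * n) • g m (n - 1))) (N r : ℕ) :
    (T ^ r) (g 0 N) = s ^ r • ∑ k ∈ range (r + 1),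
      (r.choose k * N.descFactorial k * t ^ k : R) • g (r - k) (N - k) := by
  obtain ⟨b, hb⟩ : ∃ b : ℕ → ℕ → R, ∀ r k, b r k = r.choose k * N.descFactorial k * t ^ k :=
    ⟨_, fun _ _ => rfl⟩
  simp only [← hb]
  induction r with
  | zero => simp [hb]
  | succ r ih =>
    have hpascal : ∀ k, b (r + 1) (k + 1) = b r k * (t * (N - k : ℕ)) + b r (k + 1) := by
      intro k
      simp only [hb, Nat.choose_succ_succ', Nat.descFactorial_succ]
      push_cast
      ring
    have hshift : ∑ k ∈ range (r + 2), b r k • g (r + 1 - k) (N - k)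
        = ∑ k ∈ range (r + 1), b r k • g (r - k + 1) (N - k) := by
      rw [sum_range_succ, hb r (r + 1), Nat.choose_succ_self, Nat.cast_zero, zero_mul, zero_mul,
        zero_smul, add_zero]
      refine sum_congr rfl fun k hk => ?_
      rw [Nat.sub_add_comm (Nat.lt_succ_iff.mp (mem_range.mp hk))]
    have hstep : ∑ k ∈ range (r + 2), b (r + 1) k • g (r + 1 - k) (N - k) = ∑ k ∈ range (r + 1),
        b r k • (g (r - k + 1) (N - k) + (t * (N - k : ℕ)) • g (r - k) (N - k - 1)) := by
      simp only [smul_add, sum_add_distrib]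
      rw [← hshift, sum_range_succ', sum_range_succ' _ (r + 1)]
      simp only [hpascal, add_smul, sum_add_distrib, mul_smul, Nat.sub_sub, Nat.add_sub_add_right]
      rw [hb (r + 1) 0, hb r 0, Nat.choose_zero_right, Nat.choose_zero_right]
      abel
    rw [pow_succ', Module.End.mul_apply, ih, map_smul, map_sum, hstep, pow_succ, mul_smul,
      smul_sum (r := s)]
    exact congrArg _ (sum_congr rfl fun k _ => by rw [map_smul, hT, smul_comm s])

theorem ladder_pow_apply {R V : Type*} [CommRing R] [AddCommGroup V] [Module R V]
    (T : Module.End R V) (g : ℕ → ℕ → V) (s t : R)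
    (hT : ∀ m n, T (g m n) = s • (g (m + 1) n + (t * n) • g m (n - 1))) (N r : ℕ) :
    (T ^ r) (g 0 N) = s ^ r • ∑ k ∈ range (min N r + 1),
      (r.choose k * N.descFactorial k * t ^ k : R) • g (r - k) (N - k) := by
  rw [ladder_pow_apply_range T g s t hT]
  refine congrArg _ (sum_subset (range_subset_range.2 (by omega)) fun k hk hk' => ?_).symm
  rw [Nat.descFactorial_eq_zero_iff_lt.2 (by rw [mem_range] at hk hk'; omega)]
  simp

open Polynomial in
noncomputable def physHermite : ℕ → ℝ[X]
  | 0 => 1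
  | n + 1 => 2 * X * physHermite n - derivative (physHermite n)

open Polynomial in
theorem derivative_physHermite_succ (n : ℕ) :
    derivative (physHermite (n + 1)) = 2 * (n + 1 : ℝ[X]) * physHermite n := by
  induction n with
  | zero => simp [physHermite]
  | succ n ih =>
    rw [physHermite, derivative_sub, derivative_mul, ih, derivative_mul, physHermite]
    simp only [derivative_mul, derivative_ofNat, derivative_X, derivative_add, derivative_natCast,
      derivative_one]
    push_cast
    ring

open Polynomial in
theorem iteratedDeriv_exp_neg_sq (n : ℕ) :
    iteratedDeriv n (fun y => Real.exp (-(y ^ 2)))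
      = fun y => (-1) ^ n * (physHermite n).eval y * Real.exp (-(y ^ 2)) := by
  induction n with
  | zero => simp [physHermite]
  | succ n ih =>
    funext y
    have hexp : HasDerivAt (fun y => Real.exp (-(y ^ 2))) (Real.exp (-(y ^ 2)) * -(2 * y)) y := by
      simpa using ((hasDerivAt_pow 2 y).neg).exp
    rw [iteratedDeriv_succ, ih,
      ((((physHermite n).hasDerivAt y).const_mul ((-1) ^ n)).fun_mul hexp).deriv]
    simp only [physHermite, eval_sub, eval_mul, eval_ofNat, eval_X]
    ring

theorem Hpoly_eq_eval (n : ℕ) : Hpoly n = fun y => (physHermite n).eval y := by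
  funext y
  rw [Hpoly, iteratedDeriv_exp_neg_sq]
  calc (-1) ^ n * Real.exp (y ^ 2) * ((-1) ^ n * (physHermite n).eval y * Real.exp (-(y ^ 2)))
      = ((-1) ^ n) ^ 2 * (Real.exp (y ^ 2) * Real.exp (-(y ^ 2))) * (physHermite n).eval y := by
        ring
    _ = (physHermite n).eval y := by simp [← Real.exp_add, ← pow_mul]

theorem Hpoly_zero : Hpoly 0 = fun _ => 1 := by
  simp [Hpoly_eq_eval, physHermite]

theorem hasDerivAt_Hpoly (n : ℕ) (y : ℝ) :
    HasDerivAt (Hpoly n) (2 * n * Hpoly (n - 1) y) y := by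
  simp only [Hpoly_eq_eval]
  cases n with
  | zero => simpa [physHermite] using hasDerivAt_const y (1 : ℝ)
  | succ n => simpa [derivative_physHermite_succ, mul_comm] using (physHermite (n + 1)).hasDerivAt y

theorem Hpoly_succ (n : ℕ) (y : ℝ) :
    Hpoly (n + 1) y = 2 * y * Hpoly n y - 2 * n * Hpoly (n - 1) y := by
  simp only [Hpoly_eq_eval]
  cases n with
  | zero => simp [physHermite]
  | succ n =>
    rw [physHermite.eq_2 (n + 1), derivative_physHermite_succ]
    simp

theorem contDiff_Hpoly (n : ℕ) : ContDiff ℝ ∞ (Hpoly n) := by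
  rw [Hpoly_eq_eval]
  simpa using (physHermite n).contDiff_aeval (𝕜 := ℝ) ∞

section PartialDerivative

variable {j : Fin 3} {f g : (Fin 3 → ℝ) → ℝ} {x : Fin 3 → ℝ}

theorem pd_eq_of_hasDerivAt {D : ℝ} (h : HasDerivAt (fun t => f (Function.update x j t)) D (x j)) :
    pd j f x = D :=
  h.deriv

theorem pd_eq_fderiv (hf : DifferentiableAt ℝ f x) : pd j f x = fderiv ℝ f x (Pi.single j 1) := by
  refine pd_eq_of_hasDerivAt (HasFDerivAt.comp_hasDerivAt (x j) ?_ (hasDerivAt_update x j (x j)))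
  simpa using hf.hasFDerivAt

theorem creation_add (hf : Differentiable ℝ f) (hg : Differentiable ℝ g) :
    creation j (f + g) = creation j f + creation j g := by
  funext x
  simp only [creation, Pi.add_apply, pd_eq_fderiv ((hf x).add (hg x)), pd_eq_fderiv (hf x),
    pd_eq_fderiv (hg x), fderiv_add (hf x) (hg x), _root_.add_apply]
  ring

theorem creation_smul (c : ℝ) (hf : Differentiable ℝ f) :
    creation j (c • f) = c • creation j f := by
  funext x
  simp only [creation, Pi.smul_apply, smul_eq_mul, pd_eq_fderiv ((hf x).const_smul c),
    pd_eq_fderiv (hf x), fderiv_const_smul (hf x), _root_.smul_apply]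
  ring

theorem contDiff_creation (j : Fin 3) (hf : ContDiff ℝ ∞ f) : ContDiff ℝ ∞ (creation j f) := by
  have hpd : pd j f = fun x => fderiv ℝ f x (Pi.single j 1) :=
    funext fun x => pd_eq_fderiv (hf.differentiable (by simp) x)
  have := (hf.fderiv_right (m := ∞) le_rfl).clm_apply
    (contDiff_const (c := (Pi.single j 1 : Fin 3 → ℝ)))
  unfold creation
  rw [hpd]
  fun_prop

end PartialDerivative

-- `deriv` is `0` at points of non-differentiability, so `creation j` is additive only on a subspace
-- such as the smooth functions, on which it is made an endomorphism.
def smoothFunctions : Submodule ℝ ((Fin 3 → ℝ) → ℝ) where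
  carrier := {f | ContDiff ℝ ∞ f}
  add_mem' {f g} (hf : ContDiff ℝ ∞ f) (hg : ContDiff ℝ ∞ g) := hf.add hg
  zero_mem' := (contDiff_zero_fun : ContDiff ℝ ∞ fun _ : Fin 3 → ℝ => (0 : ℝ))
  smul_mem' c f (hf : ContDiff ℝ ∞ f) := hf.const_smul c

theorem mem_smoothFunctions {f : (Fin 3 → ℝ) → ℝ} : f ∈ smoothFunctions ↔ ContDiff ℝ ∞ f :=
  Iff.rfl

noncomputable def creationₗ (j : Fin 3) : Module.End ℝ smoothFunctions where
  toFun f := ⟨creation j f, contDiff_creation j f.2⟩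
  map_add' f g := Subtype.ext <|
    creation_add ((mem_smoothFunctions.1 f.2).differentiable (by simp))
      ((mem_smoothFunctions.1 g.2).differentiable (by simp))
  map_smul' c f := Subtype.ext <|
    creation_smul c ((mem_smoothFunctions.1 f.2).differentiable (by simp))

theorem coe_creationₗ_pow_apply (j : Fin 3) (r : ℕ) (f : smoothFunctions) :
    ((creationₗ j ^ r) f : (Fin 3 → ℝ) → ℝ) = (creation j)^[r] f := by
  induction r with
  | zero => rfl
  | succ r ih => rw [pow_succ', Module.End.mul_apply, Function.iterate_succ_apply', ← ih]; rfl

theorem iterate_creation_smul {f : (Fin 3 → ℝ) → ℝ} (j : Fin 3) (r : ℕ) (c : ℝ)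
    (hf : ContDiff ℝ ∞ f) : (creation j)^[r] (c • f) = c • (creation j)^[r] f := by
  have h := coe_creationₗ_pow_apply j r (c • ⟨f, hf⟩)
  rw [map_smul, Submodule.coe_smul, coe_creationₗ_pow_apply] at h
  exact h.symm

theorem hasDerivAt_update_apply {ι : Type*} [DecidableEq ι] (x : ι → ℝ) (j i : ι) :
    HasDerivAt (fun t => Function.update x j t i) (if i = j then 1 else 0) (x j) := by
  simpa [Pi.single_apply] using hasDerivAt_pi.1 (hasDerivAt_update x j (x j)) i

theorem hasDerivAt_quadForm_update {ι : Type*} [Fintype ι] [DecidableEq ι] (C : Matrix ι ι ℝ)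
    (x : ι → ℝ) (j : ι) :
    HasDerivAt (fun t => ∑ i, ∑ l, Function.update x j t i * C i l * Function.update x j t l)
      (∑ l, (C j l + C l j) * x l) (x j) := by
  have h := HasDerivAt.fun_sum fun i (_ : i ∈ univ) => HasDerivAt.fun_sum fun l (_ : l ∈ univ) =>
    ((hasDerivAt_update_apply x j i).mul_const (C i l)).fun_mul (hasDerivAt_update_apply x j l)
  refine h.congr_deriv ?_
  simp [sum_add_distrib, add_mul, mul_comm (x _)]

theorem hasDerivAt_Sfun_update (a : Fin 3 → Fin 3 → ℝ) (i j : Fin 3) (x : Fin 3 → ℝ) :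
    HasDerivAt (fun t => Sfun a i (Function.update x j t))
      ((if j = i then 1 + a i i else -a i j) / √(1 + a i i)) (x j) := by
  have h := (((hasDerivAt_update_apply x j i).const_mul (1 + a i i)).fun_sub
    (HasDerivAt.fun_sum fun l (_ : l ∈ univ.filter (· ≠ i)) =>
      (hasDerivAt_update_apply x j l).const_mul (a i l))).div_const √(1 + a i i)
  refine h.congr_deriv ?_
  by_cases hji : j = i
  · subst hji; simp
  · simp [hji, Ne.symm hji, sum_ite_eq']

theorem contDiff_Sfun (a : Fin 3 → Fin 3 → ℝ) (i : Fin 3) : ContDiff ℝ ∞ (Sfun a i) := by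
  unfold Sfun
  fun_prop

noncomputable def gaussian {ι : Type*} [Fintype ι] (C : Matrix ι ι ℝ) (x : ι → ℝ) : ℝ :=
  Real.exp (-(∑ i, ∑ j, x i * C i j * x j))

theorem creation_mul_gaussian_apply {F : (Fin 3 → ℝ) → ℝ} {x : Fin 3 → ℝ} {j : Fin 3} {D : ℝ}
    (C : Matrix (Fin 3) (Fin 3) ℝ) (hF : HasDerivAt (fun t => F (Function.update x j t)) D (x j)) :
    creation j (fun y => F y * gaussian C y) x
      = ((2 * x j + ∑ l, (C j l + C l j) * x l) * F x - D) * gaussian C x := by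
  have h := hF.fun_mul (hasDerivAt_quadForm_update C x j).fun_neg.exp
  rw [Function.update_eq_self] at h
  rw [creation, pd_eq_of_hasDerivAt h, gaussian]
  ring

theorem two_mul_add_sum_eq_sqrt_mul_Sfun {a : Fin 3 → Fin 3 → ℝ} {C : Matrix (Fin 3) (Fin 3) ℝ}
    (hsymm : ∀ i j, a i j = a j i) (hC : ∀ i j, C i j = if i = j then a i i else -(a i j))
    {j : Fin 3} (hj : 0 < 1 + a j j) (x : Fin 3 → ℝ) :
    2 * x j + ∑ l, (C j l + C l j) * x l = 2 * √(1 + a j j) * Sfun a j x := by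
  have hCj : ∀ l, C j l + C l j = 2 * C j l := fun l => by
    rw [hC, hC, hsymm l j]
    by_cases hjl : j = l
    · subst hjl; ring
    · simp only [hjl, Ne.symm hjl, if_false]; ring
  have hsum : ∑ l, C j l * x l = a j j * x j - ∑ l ∈ univ.filter (· ≠ j), a j l * x l := by
    rw [filter_ne', ← add_sum_erase _ _ (mem_univ j), hC j j, if_pos rfl, sub_eq_add_neg,
      ← sum_neg_distrib]
    refine congrArg _ (sum_congr rfl fun l hl => ?_)
    rw [hC, if_neg (ne_of_mem_erase hl).symm]
    ring
  rw [Sfun, mul_assoc, mul_div_cancel₀ _ (Real.sqrt_pos.2 hj).ne']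
  simp only [hCj, mul_assoc, ← mul_sum, hsum]
  ring

noncomputable def hermiteGaussian (a : Fin 3 → Fin 3 → ℝ) (C : Matrix (Fin 3) (Fin 3) ℝ)
    (i j : Fin 3) (m n : ℕ) (x : Fin 3 → ℝ) : ℝ :=
  Hpoly m (Sfun a i x) * Hpoly n (Sfun a j x) * gaussian C x

theorem contDiff_hermiteGaussian (a : Fin 3 → Fin 3 → ℝ) (C : Matrix (Fin 3) (Fin 3) ℝ)
    (i j : Fin 3) (m n : ℕ) : ContDiff ℝ ∞ (hermiteGaussian a C i j m n) := by
  have := contDiff_Sfun a i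
  have := contDiff_Sfun a j
  have := contDiff_Hpoly m
  have := contDiff_Hpoly n
  unfold hermiteGaussian gaussian
  fun_prop

theorem creation_hermiteGaussian {a : Fin 3 → Fin 3 → ℝ} {C : Matrix (Fin 3) (Fin 3) ℝ}
    (ha : ∀ i, 0 < 1 + a i i) (hsymm : ∀ i j, a i j = a j i)
    (hC : ∀ i j, C i j = if i = j then a i i else -(a i j)) {i j : Fin 3} (hij : i ≠ j) (m n : ℕ) :
    creation i (hermiteGaussian a C i j m n) = √(1 + a i i) • (hermiteGaussian a C i j (m + 1) n
      + (2 * a i j / (√(1 + a i i) * √(1 + a j j)) * n) • hermiteGaussian a C i j m (n - 1)) := by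
  funext x
  have hSi : HasDerivAt (fun t => Sfun a i (Function.update x i t)) √(1 + a i i) (x i) := by
    simpa [Real.div_sqrt] using hasDerivAt_Sfun_update a i i x
  have hSj :
      HasDerivAt (fun t => Sfun a j (Function.update x i t)) (-a j i / √(1 + a j j)) (x i) := by
    simpa [hij, neg_div] using hasDerivAt_Sfun_update a j i x
  have hF := ((hasDerivAt_Hpoly m _).comp (x i) hSi).fun_mul ((hasDerivAt_Hpoly n _).comp (x i) hSj)
  simp only [Function.comp_apply, Function.update_eq_self] at hF
  have hsi := (Real.sqrt_pos.2 (ha i)).ne'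
  have hsj := (Real.sqrt_pos.2 (ha j)).ne'
  unfold hermiteGaussian
  rw [creation_mul_gaussian_apply C hF, two_mul_add_sum_eq_sqrt_mul_Sfun hsymm hC (ha i)]
  simp only [Pi.add_apply, Pi.smul_apply, smul_eq_mul]
  rw [Hpoly_succ, hsymm j i]
  field_simp
  ring

theorem iterate_creation_hermiteGaussian {a : Fin 3 → Fin 3 → ℝ} {C : Matrix (Fin 3) (Fin 3) ℝ}
    (ha : ∀ i, 0 < 1 + a i i) (hsymm : ∀ i j, a i j = a j i)
    (hC : ∀ i j, C i j = if i = j then a i i else -(a i j)) {i j : Fin 3} (hij : i ≠ j) (N r : ℕ) :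
    (creation i)^[r] (hermiteGaussian a C i j 0 N) = √(1 + a i i) ^ r • ∑ k ∈ range (min N r + 1),
      (r.choose k * N.descFactorial k * (2 * a i j / (√(1 + a i i) * √(1 + a j j))) ^ k : ℝ) •
        hermiteGaussian a C i j (r - k) (N - k) := by
  let g : ℕ → ℕ → smoothFunctions := fun m n => ⟨_, contDiff_hermiteGaussian a C i j m n⟩
  have h := congrArg Subtype.val <| ladder_pow_apply (creationₗ i) g _ _
    (fun m n => Subtype.ext (creation_hermiteGaussian ha hsymm hC hij m n)) N r
  rw [coe_creationₗ_pow_apply] at h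
  simpa [g] using h

theorem stmt3 (a : Fin 3 → Fin 3 → ℝ) (hpos : ∀ i, 0 < a i i)
    (hsymm : ∀ i j, a i j = a j i)
    (C : Matrix (Fin 3) (Fin 3) ℝ)
    (hC : ∀ i j, C i j = if i = j then a i i else -(a i j))
    (r1 r2 : ℕ) (x : Fin 3 → ℝ) :
    (creation 1)^[r2] ((creation 0)^[r1]
        (fun y => Real.exp (-(∑ i, ∑ j, y i * C i j * y j)))) x
      = (1 + a 0 0) ^ ((r1 : ℝ)/2) * (1 + a 1 1) ^ ((r2 : ℝ)/2) *
        ∑ k ∈ Finset.range (min r1 r2 + 1),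
          (r1.choose k : ℝ) * (r2.choose k : ℝ) *
            ((2 * a 0 1)^k * (k.factorial : ℝ) /
              ((1 + a 0 0) * (1 + a 1 1)) ^ ((k : ℝ)/2)) *
            Hpoly (r2 - k) (Sfun a 1 x) * Hpoly (r1 - k) (Sfun a 0 x) *
            Real.exp (-(∑ i, ∑ j, x i * C i j * x j)) := by
  have ha : ∀ i, 0 < 1 + a i i := fun i => by linarith [hpos i]
  have hE : (fun y => Real.exp (-(∑ i, ∑ j, y i * C i j * y j))) = hermiteGaussian a C 0 1 0 0 := by
    funext y
    simp [hermiteGaussian, gaussian, Hpoly_zero]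
  have hfirst : (creation 0)^[r1] (hermiteGaussian a C 0 1 0 0)
      = √(1 + a 0 0) ^ r1 • hermiteGaussian a C 1 0 0 r1 := by
    rw [iterate_creation_hermiteGaussian ha hsymm hC (by decide) 0 r1]
    funext y
    simp [hermiteGaussian, mul_comm]
  rw [hE, hfirst, iterate_creation_smul 1 r2 _ (contDiff_hermiteGaussian a C 1 0 0 r1),
    iterate_creation_hermiteGaussian ha hsymm hC (by decide) r1 r2]
  simp only [Pi.smul_apply, Finset.sum_apply, smul_eq_mul, hermiteGaussian, gaussian]
  rw [Real.rpow_div_two_eq_sqrt _ (ha 0).le, Real.rpow_div_two_eq_sqrt _ (ha 1).le,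
    Real.rpow_natCast, Real.rpow_natCast, min_comm]
  simp only [Finset.mul_sum]
  refine Finset.sum_congr rfl fun k _ => ?_
  rw [Nat.descFactorial_eq_factorial_mul_choose, hsymm 1 0,
    Real.rpow_div_two_eq_sqrt _ (mul_pos (ha 0) (ha 1)).le,
    Real.rpow_natCast, Real.sqrt_mul (ha 0).le, mul_comm √(1 + a 1 1)]
  push_cast
  ring
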